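/- Nonlinear transformation removing the wave–wave product from the Klein-Gordon equation. Let w, v, F_w be smooth functions on an open subset of ℝ^{1+2} satisfying −□w = F_w and −□v + v = w². Define V := v − w². Then V satisfies the Klein-Gordon equation −□V + V = −2 F_w w + 2 η^{αβ} ∂_α w ∂_β w, i.e. −□V + V = −2 F_w w + 2 Q₀(w, w). -/

import Mathlib

noncomputable section

open MeasureTheory

/-- A point of `ℝ^{1+2}`; coordinate `0` is the time `t`, coordinates `1, 2` are spatial. -/
abbrev Pt : Type := Fin 3 → ℝ

/-- The spatial radius `r = |x| = √((x¹)² + (x²)²)`. -/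
def rad (p : Pt) : ℝ := Real.sqrt ((p 1)^2 + (p 2)^2)

/-- The coordinate partial derivative `∂_i` (with `∂_0 = ∂_t`). -/
def pd (i : Fin 3) (φ : Pt → ℝ) (p : Pt) : ℝ := fderiv ℝ φ p (Pi.single i 1)

/-- `−□φ = ∂_t²φ − ∂_1²φ − ∂_2²φ`. -/
def negBox (φ : Pt → ℝ) (p : Pt) : ℝ :=
  pd 0 (pd 0 φ) p - pd 1 (pd 1 φ) p - pd 2 (pd 2 φ) p

/-- The Lorentz boost `L_a = x^a ∂_t + t ∂_a`, for `a ∈ {1,2}` (indexed by `Fin 2`,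
with `a : Fin 2` corresponding to the spatial coordinate `a.succ`). -/
def boost (a : Fin 2) (φ : Pt → ℝ) (p : Pt) : ℝ :=
  p a.succ * pd 0 φ p + p 0 * pd a.succ φ p

/-- The semi-hyperboloidal derivative `∂̲_a = (x^a/t) ∂_t + ∂_a`, `a ∈ {1,2}` (indexed by `Fin 2`). -/
def ubd (a : Fin 2) (φ : Pt → ℝ) (p : Pt) : ℝ :=
  (p a.succ / p 0) * pd 0 φ p + pd a.succ φ p

/-- `∂̲_β` for `β ∈ {0,1,2}`, with `∂̲_0 = ∂_t`. -/
def ubar (β : Fin 3) (φ : Pt → ℝ) (p : Pt) : ℝ :=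
  if β = 0 then pd 0 φ p else (p β / p 0) * pd 0 φ p + pd β φ p

/-- Iterated coordinate derivatives `∂^I`. -/
def pdSeq : List (Fin 3) → (Pt → ℝ) → Pt → ℝ
  | [], φ => φ
  | i :: I, φ => pd i (pdSeq I φ)

/-- Iterated boosts `L^J`. -/
def boostSeq : List (Fin 2) → (Pt → ℝ) → Pt → ℝ
  | [], φ => φ
  | a :: J, φ => boost a (boostSeq J φ)

/-- The interior of the light cone, `K = {(t,x) : r < t − 1}`. -/
def coneK : Set Pt := {p | rad p < p 0 - 1}

/-- The slab `K_{[s0,s1]} = {(t,x) ∈ K : s0² ≤ t² − r² ≤ s1²}`. -/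
def slab (s0 s1 : ℝ) : Set Pt :=
  {p | rad p < p 0 - 1 ∧ s0^2 ≤ (p 0)^2 - (rad p)^2 ∧ (p 0)^2 - (rad p)^2 ≤ s1^2}

/-- The parametrization `x ↦ (√(s² + |x|²), x)` of the hyperboloid `H_s`. -/
def hyp (s : ℝ) (x : Fin 2 → ℝ) : Pt :=
  ![Real.sqrt (s^2 + (x 0)^2 + (x 1)^2), x 0, x 1]

/-- The flat `L²` norm on the hyperboloid `H_s`. -/
def L2f (s : ℝ) (g : Pt → ℝ) : ℝ :=
  Real.sqrt (∫ x : Fin 2 → ℝ, (g (hyp s x))^2)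

/-- `φ` vanishes near the conical boundary `∂K_{[s0,s1]}` (i.e. on a neighbourhood of
`r = t − 1` within the slab, in particular outside the cone on the slab). -/
def VanishNearBdry (s0 s1 : ℝ) (φ : Pt → ℝ) : Prop :=
  ∃ ε > (0:ℝ), ∀ p : Pt, 0 < p 0 → s0^2 ≤ (p 0)^2 - (rad p)^2 →
    (p 0)^2 - (rad p)^2 ≤ s1^2 → p 0 - 1 - ε < rad p → φ p = 0

/-- The hyperboloidal energy functional `E_m(s, φ)`. -/
def energyE (m s : ℝ) (φ : Pt → ℝ) : ℝ :=
  ∫ x : Fin 2 → ℝ,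
    ((pd 0 φ (hyp s x))^2 + (pd 1 φ (hyp s x))^2 + (pd 2 φ (hyp s x))^2
      + 2 * (hyp s x 1 / hyp s x 0) * pd 0 φ (hyp s x) * pd 1 φ (hyp s x)
      + 2 * (hyp s x 2 / hyp s x 0) * pd 0 φ (hyp s x) * pd 2 φ (hyp s x)
      + m^2 * (φ (hyp s x))^2)

/-- The weighted inverted time translation `Kφ = (t + r²/t) ∂_t φ + 2 x^a ∂_a φ`. -/
def Kvf (φ : Pt → ℝ) (p : Pt) : ℝ :=
  (p 0 + (rad p)^2 / p 0) * pd 0 φ p + 2 * (p 1 * pd 1 φ p + p 2 * pd 2 φ p)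

/-- The conformal energy `E_con(s, φ)`. -/
def Econ (s : ℝ) (φ : Pt → ℝ) : ℝ :=
  ∫ x : Fin 2 → ℝ,
    ((s * ubd 0 φ (hyp s x))^2 + (s * ubd 1 φ (hyp s x))^2
      + (Kvf φ (hyp s x) + φ (hyp s x))^2)

/-- The null form `Q₀(f, g) = η^{αβ} ∂_α f ∂_β g`. -/
def nullForm (f g : Pt → ℝ) (p : Pt) : ℝ :=
  -(pd 0 f p * pd 0 g p) + pd 1 f p * pd 1 g p + pd 2 f p * pd 2 g p

open Filter Topology

section Calculus

variable {f g : Pt → ℝ} {p : Pt}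

lemma pd_congr (i : Fin 3) (h : f =ᶠ[𝓝 p] g) : pd i f p = pd i g p := by
  simp only [pd, h.fderiv_eq]

lemma pd_sub (i : Fin 3) (hf : DifferentiableAt ℝ f p) (hg : DifferentiableAt ℝ g p) :
    pd i (fun q => f q - g q) p = pd i f p - pd i g p := by
  simp [pd, fderiv_fun_sub hf hg]

lemma pd_add (i : Fin 3) (hf : DifferentiableAt ℝ f p) (hg : DifferentiableAt ℝ g p) :
    pd i (fun q => f q + g q) p = pd i f p + pd i g p := by
  simp [pd, fderiv_fun_add hf hg]

lemma pd_mul (i : Fin 3) (hf : DifferentiableAt ℝ f p) (hg : DifferentiableAt ℝ g p) :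
    pd i (fun q => f q * g q) p = f p * pd i g p + g p * pd i f p := by
  simp [pd, fderiv_fun_mul hf hg]

lemma ContDiffAt.differentiableAt_pd (i : Fin 3) (hf : ContDiffAt ℝ 2 f p) :
    DifferentiableAt ℝ (pd i f) p :=
  ((hf.fderiv_right (m := 1) le_rfl).clm_apply contDiffAt_const).differentiableAt (by norm_num)

lemma ContDiffAt.eventually_differentiableAt (hf : ContDiffAt ℝ 2 f p) :
    ∀ᶠ q in 𝓝 p, DifferentiableAt ℝ f q :=
  (hf.eventually (by simp)).mono fun _ hq => hq.differentiableAt (by norm_num)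

lemma pd_pd_sub (i : Fin 3) (hf : ContDiffAt ℝ 2 f p) (hg : ContDiffAt ℝ 2 g p) :
    pd i (pd i (fun q => f q - g q)) p = pd i (pd i f) p - pd i (pd i g) p := by
  have hfirst : pd i (fun q => f q - g q) =ᶠ[𝓝 p] fun q => pd i f q - pd i g q :=
    (hf.eventually_differentiableAt.and hg.eventually_differentiableAt).mono
      fun _ hq => pd_sub i hq.1 hq.2
  rw [pd_congr i hfirst, pd_sub i (hf.differentiableAt_pd i) (hg.differentiableAt_pd i)]

lemma pd_pd_mul (i : Fin 3) (hf : ContDiffAt ℝ 2 f p) (hg : ContDiffAt ℝ 2 g p) :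
    pd i (pd i (fun q => f q * g q)) p
      = f p * pd i (pd i g) p + g p * pd i (pd i f) p + 2 * (pd i f p * pd i g p) := by
  have hf1 := hf.differentiableAt (by norm_num)
  have hg1 := hg.differentiableAt (by norm_num)
  have hfirst : pd i (fun q => f q * g q) =ᶠ[𝓝 p] fun q => f q * pd i g q + g q * pd i f q :=
    (hf.eventually_differentiableAt.and hg.eventually_differentiableAt).mono
      fun _ hq => pd_mul i hq.1 hq.2
  rw [pd_congr i hfirst,
    pd_add i (hf1.fun_mul (hg.differentiableAt_pd i)) (hg1.fun_mul (hf.differentiableAt_pd i)),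
    pd_mul i hf1 (hg.differentiableAt_pd i), pd_mul i hg1 (hf.differentiableAt_pd i)]
  ring

lemma negBox_sub (hf : ContDiffAt ℝ 2 f p) (hg : ContDiffAt ℝ 2 g p) :
    negBox (fun q => f q - g q) p = negBox f p - negBox g p := by
  simp only [negBox, pd_pd_sub _ hf hg]
  ring

lemma negBox_mul (hf : ContDiffAt ℝ 2 f p) (hg : ContDiffAt ℝ 2 g p) :
    negBox (fun q => f q * g q) p = f p * negBox g p + g p * negBox f p - 2 * nullForm f g p := by
  simp only [negBox, nullForm, pd_pd_mul _ hf hg]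
  ring

end Calculus

theorem KleinGordon_wave_transformation_general
    (U : Set Pt) (hU : IsOpen U)
    (w v Fw : Pt → ℝ)
    (hw : ContDiffOn ℝ (⊤ : ℕ∞) w U) (hv : ContDiffOn ℝ (⊤ : ℕ∞) v U)
    (heqw : ∀ p ∈ U, negBox w p = Fw p)
    (heqv : ∀ p ∈ U, negBox v p + v p = (w p)^2) :
    ∀ p ∈ U,
      negBox (fun q => v q - (w q)^2) p + (v p - (w p)^2)
        = -2 * Fw p * w p
          + 2 * (-(pd 0 w p * pd 0 w p) + pd 1 w p * pd 1 w p + pd 2 w p * pd 2 w p) := by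
  intro p hp
  have hw2 : ContDiffAt ℝ 2 w p := (hw.contDiffAt (hU.mem_nhds hp)).of_le (by norm_cast)
  have hv2 : ContDiffAt ℝ 2 v p := (hv.contDiffAt (hU.mem_nhds hp)).of_le (by norm_cast)
  have hbox : negBox (fun q => v q - (w q)^2) p
      = negBox v p - 2 * w p * negBox w p + 2 * nullForm w w p := by
    simp only [sq]
    rw [negBox_sub hv2 (hw2.mul hw2), negBox_mul hw2 hw2]
    ring
  rw [hbox, ← nullForm, heqw p hp]
  linear_combination heqv p hp

/-- **Nonlinear transformation removing the wave–wave product from the Klein-Gordon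
equation** (Example 3.3). If `−□w = F_w` and `−□v + v = w²` on an open set `U`, then
`V := v − w²` solves `−□V + V = −2F_w w + 2Q₀(w,w)` on `U`, where
`Q₀(w,w) = −(∂_tw)² + Σ_a (∂_aw)²`. -/
theorem KleinGordon_wave_transformation
    (U : Set Pt) (hU : IsOpen U)
    (w v Fw : Pt → ℝ)
    (hw : ContDiffOn ℝ (⊤ : ℕ∞) w U) (hv : ContDiffOn ℝ (⊤ : ℕ∞) v U)
    (hFw : ContDiffOn ℝ (⊤ : ℕ∞) Fw U)
    (heqw : ∀ p ∈ U, negBox w p = Fw p)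
    (heqv : ∀ p ∈ U, negBox v p + v p = (w p)^2) :
    ∀ p ∈ U,
      negBox (fun q => v q - (w q)^2) p + (v p - (w p)^2)
        = -2 * Fw p * w p
          + 2 * (-(pd 0 w p * pd 0 w p) + pd 1 w p * pd 1 w p + pd 2 w p * pd 2 w p) :=
  KleinGordon_wave_transformation_general U hU w v Fw hw hv heqw heqv
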